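/- arXiv:2309.01260 — 8 statements merged into one kernel-verified Lean document; each statement's English description precedes it below -/
import Mathlib

section
/- Lenzing's criterion: Let C be an essentially small category, D a full subcategory of C, and F : C^op → Set a presheaf which is a filtered colimit of representable presheaves (an ind-object). Then F is isomorphic to a colimit colim_{j∈J} yoneda(G(j)) for some small filtered category J and some functor G : J ⥤ C taking all its values in D, if and only if every morphism of presheaves yoneda(C₀) → F with C₀ in C factors as yoneda(C₀) → yoneda(D₀) → F for some object D₀ of D and some morphism C₀ → D₀ in C. -/
universe v u

open CategoryTheory CategoryTheory.Limits Opposite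

/-!
Any map from a representable into a colimit of representables factors through one of the
colimit injections, which gives the forward direction. Conversely, an ind-object `F` is the
filtered colimit of its category of elements `CostructuredArrow yoneda F`, and the factorization
condition says exactly that the full subcategory of elements `yoneda D₀ ⟶ F` with `D₀ ∈ S` is
cofinal in it; a cofinal full subcategory of a filtered category is filtered and has the same
colimit.
-/

namespace CategoryTheory

lemma exists_yoneda_map_comp_colimit_ι {C : Type u} [Category.{v} C] {J : Type v}
    [SmallCategory J] (G : J ⥤ C) {X : C}
    (f : yoneda.obj X ⟶ colimit (G ⋙ yoneda)) :
    ∃ (j : J) (g : X ⟶ G.obj j), yoneda.map g ≫ colimit.ι (G ⋙ yoneda) j = f := by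
  obtain ⟨j, g, hg⟩ := FunctorToTypes.jointly_surjective' (G ⋙ yoneda) _ (yonedaEquiv f)
  refine ⟨j, g, yonedaEquiv.injective ?_⟩
  rw [yonedaEquiv_comp, yonedaEquiv_yoneda_map, hg]

lemma isIndObject_of_iso_colimit {C : Type u} [Category.{v} C] {I : Type v} [SmallCategory I]
    [IsFiltered I] (X : I ⥤ C) {F : Cᵒᵖ ⥤ Type v} (e : colimit (X ⋙ yoneda) ≅ F) : IsIndObject F :=
  IsIndObject.map e.hom <| IsIndObject.mk <|
    IndObjectPresentation.ofCocone (colimit.cocone _) (colimit.isColimit _)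

section

variable {C : Type u} [SmallCategory C] (S : Set C) (F : Cᵒᵖ ⥤ Type u)

lemma exists_hom_to_inverseImage_proj_of_factors
    (h : ∀ (C₀ : C) (f : yoneda.obj C₀ ⟶ F), ∃ (D₀ : C) (_ : D₀ ∈ S) (g : C₀ ⟶ D₀)
      (h : yoneda.obj D₀ ⟶ F), f = yoneda.map g ≫ h)
    (p : CostructuredArrow yoneda F) :
    ∃ q : (ObjectProperty.inverseImage (· ∈ S) (CostructuredArrow.proj yoneda F)).FullSubcategory,
      Nonempty (p ⟶ ObjectProperty.ι _ |>.obj q) := by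
  obtain ⟨D₀, hD₀, g, h', hfac⟩ := h p.left p.hom
  exact ⟨⟨CostructuredArrow.mk h', hD₀⟩, ⟨CostructuredArrow.homMk g hfac.symm⟩⟩

lemma exists_isFiltered_colimit_iso_of_factors (hF : IsIndObject F)
    (h : ∀ (C₀ : C) (f : yoneda.obj C₀ ⟶ F), ∃ (D₀ : C) (_ : D₀ ∈ S) (g : C₀ ⟶ D₀)
      (h : yoneda.obj D₀ ⟶ F), f = yoneda.map g ≫ h) :
    ∃ (J : Type u) (_ : SmallCategory J) (_ : IsFiltered J) (G : J ⥤ C),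
      (∀ j : J, G.obj j ∈ S) ∧ Nonempty (colimit (G ⋙ yoneda) ≅ F) := by
  let P := ObjectProperty.inverseImage (· ∈ S) (CostructuredArrow.proj yoneda F)
  have := hF.isFiltered
  have hcofinal := exists_hom_to_inverseImage_proj_of_factors S F h
  have : P.ι.Final := Functor.final_of_exists_of_isFiltered_of_fullyFaithful _ hcofinal
  have : IsFiltered P.FullSubcategory :=
    IsFiltered.of_exists_of_isFiltered_of_fullyFaithful _ hcofinal
  exact ⟨_, inferInstance, inferInstance, P.ι ⋙ CostructuredArrow.proj yoneda F, fun q => q.2,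
    ⟨Functor.Final.colimitIso P.ι (CostructuredArrow.proj yoneda F ⋙ yoneda) ≪≫
      (colimit.isColimit _).coconePointUniqueUpToIso (Presheaf.isColimitTautologicalCocone F)⟩⟩

end

end CategoryTheory

/-- Lenzing's criterion: an ind-object `F` over `C` is a filtered colimit of
representables coming from a full subcategory `D ⊆ C` (given by the set of objects `S`) if and
only if every morphism `yoneda C₀ ⟶ F` with `C₀ ∈ C` factors through `yoneda D₀` for some
`D₀ ∈ D`. -/
theorem statement_2 {C : Type u} [SmallCategory C] (S : Set C) (F : Cᵒᵖ ⥤ Type u)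
    (hF : ∃ (I : Type u) (_ : SmallCategory I) (_ : IsFiltered I) (X : I ⥤ C),
      Nonempty (colimit (X ⋙ yoneda) ≅ F)) :
    (∃ (J : Type u) (_ : SmallCategory J) (_ : IsFiltered J) (G : J ⥤ C),
        (∀ j : J, G.obj j ∈ S) ∧ Nonempty (colimit (G ⋙ yoneda) ≅ F)) ↔
      (∀ (C₀ : C) (f : yoneda.obj C₀ ⟶ F), ∃ (D₀ : C) (_ : D₀ ∈ S) (g : C₀ ⟶ D₀)
        (h : yoneda.obj D₀ ⟶ F), f = yoneda.map g ≫ h) := by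
  constructor
  · rintro ⟨J, _, _, G, hG, ⟨e⟩⟩ C₀ f
    obtain ⟨j, g, hg⟩ := exists_yoneda_map_comp_colimit_ι G (f ≫ e.inv)
    refine ⟨G.obj j, hG j, g, colimit.ι (G ⋙ yoneda) j ≫ e.hom, ?_⟩
    rw [← Category.assoc, hg, Category.assoc, Iso.inv_hom_id, Category.comp_id]
  · obtain ⟨I, _, _, X, ⟨e⟩⟩ := hF
    exact exists_isFiltered_colimit_iso_of_factors S F (isIndObject_of_iso_colimit X e)
end

section
/- Let C be an essentially small pretriangulated category (with shift functors and distinguished triangles; its opposite C^op is then also pretriangulated). An additive functor F : C^op → Ab is cohomological (i.e., sends every distinguished triangle X → Y → Z → X[1] of C to an exact sequence F(Z) → F(Y) → F(X) of abelian groups) if and only if the underlying presheaf of sets of F (the composite of F with the forgetful functor Ab → Set) is a filtered colimit of representable presheaves, i.e., an ind-object of Fun(C^op, Set). -/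
/-!
By the recognition theorem for ind-objects (`isIndObject_iff`), a presheaf of sets on a small
category is a filtered colimit of representables exactly when its category of elements is
cofiltered. For an additive `F`, two elements always admit a cone through a biproduct, and a
parallel pair `f, g` of morphisms of elements is equalized by a map killing `f - g`. If `F` is
cohomological, completing `f - g` to a distinguished triangle provides such a map together with
the required element. Conversely, if `F (mor₁) y = 0`, then `mor₁` and `0` are parallel morphisms
of elements out of `y`; a morphism equalizing them kills `mor₁`, hence factors through `mor₂`,
which exhibits `y` in the image of `F (mor₂)`.
-/

universe u

open CategoryTheory CategoryTheory.Limits CategoryTheory.Pretriangulated Opposite ZeroObject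

section IndObject

variable {C : Type u} [SmallCategory C]

lemma exists_filtered_colimit_iso_iff_isIndObject (P : Cᵒᵖ ⥤ Type u) :
    (∃ (I : Type u) (_ : SmallCategory I) (_ : IsFiltered I) (X : I ⥤ C),
        Nonempty (colimit (X ⋙ yoneda) ≅ P)) ↔ IsIndObject P := by
  constructor
  · rintro ⟨I, _, _, X, ⟨e⟩⟩
    exact IsIndObject.map e.hom
      (.mk (IndObjectPresentation.ofCocone (colimit.cocone _) (colimit.isColimit _)))
  · rintro ⟨⟨p⟩⟩
    exact ⟨p.I, inferInstance, inferInstance, p.F,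
      ⟨(colimit.isColimit _).coconePointUniqueUpToIso p.coconeIsColimit⟩⟩

lemma isIndObject_iff_isCofiltered_elements (P : Cᵒᵖ ⥤ Type u) :
    IsIndObject P ↔ IsCofiltered P.Elements := by
  rw [isIndObject_iff, ← isFiltered_op_iff_isCofiltered,
    IsFiltered.iff_of_equivalence (CategoryOfElements.costructuredArrowYonedaEquivalence P)]
  exact and_iff_left (finallySmall_of_essentiallySmall _)

end IndObject

section Cohomological

variable {C : Type*} [Category C] [Preadditive C] [HasZeroObject C] [HasShift C ℤ]
  [∀ n : ℤ, (shiftFunctor C n).Additive] [Pretriangulated C]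

def IsCohomological (F : Cᵒᵖ ⥤ AddCommGrpCat) : Prop :=
  ∀ T : Triangle C, T ∈ distTriang C → Function.Exact (F.map T.mor₂.op) (F.map T.mor₁.op)

variable {F : Cᵒᵖ ⥤ AddCommGrpCat}

lemma IsCohomological.exists_comp_eq_zero (hF : IsCohomological F) {X Y : C} (u : X ⟶ Y)
    (y : F.obj (op Y)) (hy : F.map u.op y = 0) :
    ∃ (Z : C) (w : Y ⟶ Z) (z : F.obj (op Z)), u ≫ w = 0 ∧ F.map w.op z = y := by
  obtain ⟨Z, w, _, hT⟩ := distinguished_cocone_triangle u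
  obtain ⟨z, hz⟩ := (hF _ hT y).mp hy
  exact ⟨Z, w, z, comp_distTriang_mor_zero₁₂ _ hT, hz⟩

variable [F.Additive]

lemma map_mor₁_map_mor₂_eq_zero {T : Triangle C} (hT : T ∈ distTriang C)
    (z : F.obj (op T.obj₃)) : F.map T.mor₁.op (F.map T.mor₂.op z) = 0 := by
  rw [← ConcreteCategory.comp_apply, ← F.map_comp, ← op_comp, comp_distTriang_mor_zero₁₂ _ hT,
    op_zero, F.map_zero]
  rfl

lemma IsCohomological.isCofiltered_elements (hF : IsCohomological F) :
    IsCofiltered (F ⋙ forget AddCommGrpCat).Elements where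
  nonempty := ⟨⟨op 0, (0 : F.obj (op 0))⟩⟩
  cone_objs := by
    rintro ⟨⟨X⟩, x⟩ ⟨⟨Y⟩, y⟩
    let z : F.obj (op (X ⊞ Y)) := F.map biprod.fst.op x + F.map biprod.snd.op y
    refine ⟨⟨op (X ⊞ Y), z⟩, ⟨biprod.inl.op, ?_⟩, ⟨biprod.inr.op, ?_⟩, trivial⟩ <;>
      simp [z, ← ConcreteCategory.comp_apply, ← F.map_comp, ← op_comp]
  cone_maps := by
    intro p q f g
    obtain ⟨Z, w, z, hw, hz⟩ := hF.exists_comp_eq_zero (f.val.unop - g.val.unop) p.2 (by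
      rw [op_sub, F.map_sub]
      exact sub_eq_zero.mpr (f.2.trans g.2.symm))
    refine ⟨(F ⋙ forget AddCommGrpCat).elementsMk (op Z) z, ⟨w.op, hz⟩,
      CategoryOfElements.ext _ _ _ ?_⟩
    rw [Preadditive.sub_comp, sub_eq_zero] at hw
    exact Quiver.Hom.unop_inj hw

lemma isCohomological_of_isCofiltered_elements
    [IsCofiltered (F ⋙ forget AddCommGrpCat).Elements] : IsCohomological F := by
  intro T hT y
  refine ⟨fun hy ↦ ?_, by rintro ⟨z, rfl⟩; exact map_mor₁_map_mor₂_eq_zero hT z⟩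
  let P := F ⋙ forget AddCommGrpCat
  let mor₁ : P.elementsMk (op T.obj₂) y ⟶ P.elementsMk (op T.obj₁) 0 := ⟨T.mor₁.op, hy⟩
  let zero : P.elementsMk (op T.obj₂) y ⟶ P.elementsMk (op T.obj₁) 0 := ⟨0, by simp [P]; rfl⟩
  obtain ⟨⟨⟨W⟩, w⟩, ⟨h, hh⟩, hcomm⟩ := IsCofilteredOrEmpty.cone_maps mor₁ zero
  have hmor₁ : T.mor₁ ≫ h.unop = 0 ≫ h.unop := congrArg (fun k ↦ k.val.unop) hcomm
  rw [zero_comp] at hmor₁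
  obtain ⟨q, hq⟩ := Triangle.yoneda_exact₂ T hT h.unop hmor₁
  exact ⟨F.map q.op w, by rwa [← ConcreteCategory.comp_apply, ← F.map_comp, ← op_comp, ← hq]⟩

lemma isCohomological_iff_isCofiltered_elements :
    IsCohomological F ↔ IsCofiltered (F ⋙ forget AddCommGrpCat).Elements :=
  ⟨IsCohomological.isCofiltered_elements, fun _ ↦ isCohomological_of_isCofiltered_elements⟩

end Cohomological

/-- For an essentially small pretriangulated category `C`, an additive functor
`F : Cᵒᵖ ⥤ Ab` is cohomological (sends distinguished triangles `X → Y → Z → X⟦1⟧` to exact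
sequences `F Z → F Y → F X`) if and only if its underlying presheaf of sets is a filtered
colimit of representable presheaves. -/
theorem statement_3 {C : Type u} [SmallCategory C] [Preadditive C] [HasZeroObject C]
    [HasShift C ℤ] [∀ n : ℤ, (shiftFunctor C n).Additive] [Pretriangulated C]
    (F : Cᵒᵖ ⥤ AddCommGrpCat.{u}) [F.Additive] :
    (∀ T : Triangle C, T ∈ (distTriang C) →
        Function.Exact ⇑(F.map T.mor₂.op) ⇑(F.map T.mor₁.op)) ↔
      ∃ (I : Type u) (_ : SmallCategory I) (_ : IsFiltered I) (X : I ⥤ C),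
        Nonempty (colimit (X ⋙ yoneda) ≅ F ⋙ forget AddCommGrpCat.{u}) := by
  rw [exists_filtered_colimit_iso_iff_isIndObject, isIndObject_iff_isCofiltered_elements]
  exact isCohomological_iff_isCofiltered_elements
end

section
/- Let T be a pretriangulated category, X an object of T, and let α₁ : C → D₁ and α₂ : C → D₂ be morphisms in T. Let U₁ and U₂ be the additive subgroups of Hom(C, X) given by the images of the precomposition maps Hom(D₁, X) → Hom(C, X) (h ↦ α₁ ∘ h, written αᵢ ≫ h) and Hom(D₂, X) → Hom(C, X). Then: (a) U₁ + U₂ equals the image of the precomposition map Hom(D₁ ⊕ D₂, X) → Hom(C, X) induced by the morphism (α₁, α₂) : C → D₁ ⊕ D₂; (b) if C → D₁ ⊕ D₂ → E → C[1] is a distinguished triangle extending (α₁, α₂), with β : D₁ ⊕ D₂ → E, then U₁ ∩ U₂ equals the image of the precomposition map Hom(E, X) → Hom(C, X) induced by the composite C → D₁ → E (i.e., α₁ followed by the inclusion into the biproduct followed by β). -/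
universe v u

open CategoryTheory CategoryTheory.Limits CategoryTheory.Pretriangulated

/-!
Sums: a map out of `D₁ ⊞ D₂` is a pair of maps, so precomposing with `(α₁, α₂)` produces exactly
the sums `α₁ ≫ h₁ + α₂ ≫ h₂`.

Intersections: if `α₁ ≫ h₁ = α₂ ≫ h₂`, then `(h₁, -h₂) : D₁ ⊞ D₂ ⟶ X` kills `(α₁, α₂)`, so by
exactness of `Hom(-, X)` on the triangle it factors as `β ≫ e`, whence `α₁ ≫ h₁ = α₁ ≫ inl ≫ β ≫ e`.
Conversely `(α₁, α₂) ≫ β = 0` gives `α₁ ≫ inl ≫ β = -(α₂ ≫ inr ≫ β)`, so the image of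
`α₁ ≫ inl ≫ β` lies in both subgroups.
-/

namespace CategoryTheory.Limits

variable {C : Type*} [Category C] [Preadditive C] [HasBinaryBiproducts C] {P Q₁ Q₂ X : C}

lemma biprod.lift_comp (f₁ : P ⟶ Q₁) (f₂ : P ⟶ Q₂) (g : Q₁ ⊞ Q₂ ⟶ X) :
    biprod.lift f₁ f₂ ≫ g = f₁ ≫ biprod.inl ≫ g + f₂ ≫ biprod.inr ≫ g := by
  simp [biprod.lift_eq]

lemma biprod.comp_inl_comp_eq_neg_of_lift_comp_eq_zero {f₁ : P ⟶ Q₁} {f₂ : P ⟶ Q₂}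
    {g : Q₁ ⊞ Q₂ ⟶ X} (h : biprod.lift f₁ f₂ ≫ g = 0) :
    f₁ ≫ biprod.inl ≫ g = -(f₂ ≫ biprod.inr ≫ g) :=
  eq_neg_of_add_eq_zero_left (by rwa [← biprod.lift_comp])

end CategoryTheory.Limits

namespace CategoryTheory.Preadditive

variable {C : Type*} [Category C] [Preadditive C] {X P Q : C}

@[simp]
lemma leftComp_apply (f : P ⟶ Q) (g : Q ⟶ X) : leftComp X f g = f ≫ g := rfl

lemma range_leftComp_comp_le {R : C} (f : P ⟶ Q) (g : Q ⟶ R) :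
    (leftComp X (f ≫ g)).range ≤ (leftComp X f).range := by
  rintro _ ⟨h, rfl⟩
  exact ⟨g ≫ h, (Category.assoc f g h).symm⟩

lemma range_leftComp_neg (f : P ⟶ Q) : (leftComp X (-f)).range = (leftComp X f).range := by
  suffices ∀ f : P ⟶ Q, (leftComp X (-f)).range ≤ (leftComp X f).range from
    le_antisymm (this f) (by simpa using this (-f))
  rintro f _ ⟨h, rfl⟩
  exact ⟨-h, by simp⟩

lemma range_leftComp_biprod_lift [HasBinaryBiproducts C] {Q₁ Q₂ : C} (f₁ : P ⟶ Q₁)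
    (f₂ : P ⟶ Q₂) :
    (leftComp X (biprod.lift f₁ f₂)).range = (leftComp X f₁).range ⊔ (leftComp X f₂).range := by
  apply le_antisymm
  · rintro _ ⟨h, rfl⟩
    rw [leftComp_apply, biprod.lift_comp]
    exact AddSubgroup.add_mem_sup ⟨biprod.inl ≫ h, rfl⟩ ⟨biprod.inr ≫ h, rfl⟩
  · refine sup_le ?_ ?_ <;> rintro _ ⟨h, rfl⟩
    · exact ⟨biprod.desc h 0, by simp⟩
    · exact ⟨biprod.desc 0 h, by simp⟩

end CategoryTheory.Preadditive

namespace CategoryTheory.Pretriangulated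

open Preadditive

variable {C : Type*} [Category C] [Preadditive C] [HasZeroObject C] [HasShift C ℤ]
  [∀ n : ℤ, (shiftFunctor C n).Additive] [Pretriangulated C] [HasBinaryBiproducts C]

lemma range_leftComp_inf_eq_of_distinguished (X : C) {P Q₁ Q₂ R : C} {f₁ : P ⟶ Q₁}
    {f₂ : P ⟶ Q₂} {g : Q₁ ⊞ Q₂ ⟶ R} {δ : R ⟶ P⟦(1 : ℤ)⟧}
    (hT : Triangle.mk (biprod.lift f₁ f₂) g δ ∈ distTriang C) :
    (leftComp X f₁).range ⊓ (leftComp X f₂).range =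
      (leftComp X (f₁ ≫ biprod.inl ≫ g)).range := by
  apply le_antisymm
  · rintro _ ⟨⟨h₁, rfl⟩, h₂, hh₂⟩
    have hzero : biprod.lift f₁ f₂ ≫ biprod.desc h₁ (-h₂) = 0 := by
      simp only [leftComp_apply] at hh₂
      simp [hh₂]
    obtain ⟨e, he⟩ : ∃ e : R ⟶ X, biprod.desc h₁ (-h₂) = g ≫ e :=
      Triangle.yoneda_exact₂ _ hT _ hzero
    refine ⟨e, ?_⟩
    calc (f₁ ≫ biprod.inl ≫ g) ≫ e = f₁ ≫ biprod.inl ≫ biprod.desc h₁ (-h₂) := by simp [he]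
      _ = f₁ ≫ h₁ := by simp
  · have hneg : f₁ ≫ biprod.inl ≫ g = -(f₂ ≫ biprod.inr ≫ g) :=
      biprod.comp_inl_comp_eq_neg_of_lift_comp_eq_zero (comp_distTriang_mor_zero₁₂ _ hT)
    refine le_inf (range_leftComp_comp_le f₁ _) ?_
    rw [hneg, range_leftComp_neg]
    exact range_leftComp_comp_le f₂ _

end CategoryTheory.Pretriangulated

/-- In a pretriangulated category, for morphisms `α₁ : C ⟶ D₁`, `α₂ : C ⟶ D₂` and
an object `X`, with `U₁, U₂ ⊆ Hom(C, X)` the images of the precomposition maps: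
(a) `U₁ + U₂` is the image of the precomposition map induced by `(α₁, α₂) : C ⟶ D₁ ⊞ D₂`;
(b) if `C → D₁ ⊞ D₂ →β E → C⟦1⟧` is a distinguished triangle, then `U₁ ∩ U₂` is the image of
the precomposition map induced by `α₁ ≫ inl ≫ β : C ⟶ E`. -/
theorem statement_4 {T : Type u} [Category.{v} T] [Preadditive T] [HasZeroObject T]
    [HasShift T ℤ] [∀ n : ℤ, (shiftFunctor T n).Additive] [Pretriangulated T]
    [HasBinaryBiproducts T]
    (X C D₁ D₂ : T) (α₁ : C ⟶ D₁) (α₂ : C ⟶ D₂) :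
    ((Preadditive.leftComp X α₁).range ⊔ (Preadditive.leftComp X α₂).range =
        (Preadditive.leftComp X (biprod.lift α₁ α₂)).range) ∧
      (∀ (E : T) (β : D₁ ⊞ D₂ ⟶ E) (γ : E ⟶ C⟦(1 : ℤ)⟧),
        Triangle.mk (biprod.lift α₁ α₂) β γ ∈ (distTriang T) →
          (Preadditive.leftComp X α₁).range ⊓ (Preadditive.leftComp X α₂).range =
            (Preadditive.leftComp X (α₁ ≫ biprod.inl ≫ β)).range) :=
  ⟨(Preadditive.range_leftComp_biprod_lift α₁ α₂).symm,
    fun _ _ _ hT => range_leftComp_inf_eq_of_distinguished X hT⟩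
end

section
/- Let T be a pretriangulated category admitting countable coproducts, let φₙ : Xₙ → Xₙ₊₁ (n ∈ ℕ) be a sequence of morphisms in T, and let X be an object fitting into a distinguished triangle ∐ₙ Xₙ →(1−φ) ∐ₙ Xₙ →π X → (∐ₙ Xₙ)[1], where 1−φ is the morphism whose n-th component is ιₙ − φₙ ≫ ιₙ₊₁ (ιₙ denoting the coproduct inclusions). If C is a compact object of T, then the canonical map colimₙ Hom(C, Xₙ) → Hom(C, X), induced by the composites Xₙ → ∐ₙ Xₙ →π X, is a bijection. -/
universe w v u

open CategoryTheory CategoryTheory.Limits CategoryTheory.Pretriangulated Opposite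

noncomputable section

variable {T : Type u} [Category.{v} T] [Preadditive T] [HasZeroObject T] [HasShift T ℤ]
  [∀ n : ℤ, (shiftFunctor T n).Additive] [Pretriangulated T] [HasCountableCoproducts T]

/-- An object `C` of `T` is compact if for every family `(Yᵢ)` of objects admitting a
coproduct, the canonical map `⊕ᵢ Hom(C, Yᵢ) → Hom(C, ∐ᵢ Yᵢ)` is bijective. -/
def IsCompactObject (C : T) : Prop :=
  ∀ (ι : Type w) (_ : DecidableEq ι) (Y : ι → T) (_ : HasCoproduct Y),
    Function.Bijective
      ⇑(DirectSum.toAddMonoid (fun i => Preadditive.rightComp C (Sigma.ι Y i)))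

variable {Xs : ℕ → T}

lemma statement5_vanish (φ : ∀ n, Xs n ⟶ Xs (n + 1)) {X : T} {π : (∐ Xs) ⟶ X}
    {δ : X ⟶ (∐ Xs)⟦(1 : ℤ)⟧}
    (hT : Triangle.mk (Sigma.desc (fun n => Sigma.ι Xs n - φ n ≫ Sigma.ι Xs (n + 1))) π δ ∈
      (distTriang T)) (n : ℕ) :
    Sigma.ι Xs n ≫ π = φ n ≫ Sigma.ι Xs (n + 1) ≫ π := by
  have h0 : Sigma.desc (fun n => Sigma.ι Xs n - φ n ≫ Sigma.ι Xs (n + 1)) ≫ π = 0 :=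
    comp_distTriang_mor_zero₁₂ _ hT
  have h1 : (Sigma.ι Xs n ≫ Sigma.desc (fun n => Sigma.ι Xs n - φ n ≫ Sigma.ι Xs (n + 1))) ≫ π
      = 0 := by rw [Category.assoc, h0, comp_zero]
  rw [Sigma.ι_desc, Preadditive.sub_comp] at h1
  rw [sub_eq_zero] at h1
  simpa using h1

/-- The cocone on `n ↦ Hom(C, Xₙ)` with apex `Hom(C, X)` induced by the morphisms
`Xₙ → ∐ₙ Xₙ → X`. -/
def statement5Cocone (C : T) (φ : ∀ n, Xs n ⟶ Xs (n + 1)) {X : T} (π : (∐ Xs) ⟶ X)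
    (h : ∀ n, Sigma.ι Xs n ≫ π = φ n ≫ Sigma.ι Xs (n + 1) ≫ π) :
    Cocone (Functor.ofSequence φ ⋙ coyoneda.obj (op C)) where
  pt := C ⟶ X
  ι :=
    { app := fun n => TypeCat.ofHom (fun g => g ≫ Sigma.ι Xs n ≫ π)
      naturality := by
        have key : ∀ (n m : ℕ) (hnm : n ≤ m),
            (Functor.ofSequence φ).map (homOfLE hnm) ≫ Sigma.ι Xs m ≫ π =
              Sigma.ι Xs n ≫ π := by
          intro n m hnm
          induction m, hnm using Nat.le_induction with
          | base => simp; rfl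
          | succ m hnm ih =>
            have hco : (homOfLE (Nat.le_succ_of_le hnm) : (n : ℕ) ⟶ (m + 1 : ℕ)) =
                homOfLE hnm ≫ homOfLE (Nat.le_add_right m 1) := rfl
            rw [hco, Functor.map_comp, Category.assoc, Functor.ofSequence_map_homOfLE_succ]
            erw [← h m, ih]
        intro n m f
        ext g
        have : f = homOfLE (leOfHom f) := rfl
        dsimp
        rw [Category.assoc, this, key n m (leOfHom f)]
        rfl }


/-!
Compactness of `C` identifies `Hom(C, ∐ Xₙ)` with `⨁ₙ Hom(C, Xₙ)`, and under this
identification `1 - φ` becomes `x ↦ x - S x`, where `S` moves the `n`-th summand to the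
`(n+1)`-st along `φₙ`. The equation `x = S x + g` with `g` concentrated in degree `N` forces
`x` to vanish below `N` and to be the image of `g` in every degree `M ≥ N`; as `x` has finite
support, `g` dies at a finite stage. Read through the long exact `Hom(C, -)` sequence of the
triangle, this gives injectivity; for `g = 0` it shows that `1 - φ` (and its shift, as the shift
commutes with coproducts) is injective on maps out of `C`, so every `C ⟶ X` lifts to `∐ Xₙ`
and hence, by compactness, factors through some `Xₙ`: this gives surjectivity.
-/

open DirectSum

section OfSequence

variable {A : Type*} [Category A] {Y : ℕ → A} [HasCoproduct Y] {ψ : ∀ n, Y n ⟶ Y (n + 1)}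

lemma ι_comp_eq_map_comp_ι_comp {Z : A} {π : ∐ Y ⟶ Z}
    (hπ : ∀ n, Sigma.ι Y n ≫ π = ψ n ≫ Sigma.ι Y (n + 1) ≫ π) {n m : ℕ} (h : n ≤ m) :
    Sigma.ι Y n ≫ π = Functor.OfSequence.map ψ n m h ≫ Sigma.ι Y m ≫ π := by
  induction m, h using Nat.le_induction with
  | base => rw [Functor.OfSequence.map_id, Category.id_comp]
  | succ m h ih =>
    rw [ih, hπ m, ← Functor.OfSequence.map_le_succ ψ m, ← Functor.OfSequence.map_comp_assoc]

end OfSequence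

section Preadditive

variable {A : Type*} [Category A] [Preadditive A]

def sigmaOneSub {Y : ℕ → A} [HasCoproduct Y] (ψ : ∀ n, Y n ⟶ Y (n + 1)) : ∐ Y ⟶ ∐ Y :=
  Sigma.desc fun n => Sigma.ι Y n - ψ n ≫ Sigma.ι Y (n + 1)

lemma sigmaOneSub_comp_sigmaComparison {B : Type*} [Category B] [Preadditive B] (F : A ⥤ B)
    [F.Additive] {Y : ℕ → A} [HasCoproduct Y] [HasCoproduct fun n => F.obj (Y n)]
    (ψ : ∀ n, Y n ⟶ Y (n + 1)) :
    sigmaOneSub (fun n => F.map (ψ n)) ≫ sigmaComparison F Y =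
      sigmaComparison F Y ≫ F.map (sigmaOneSub ψ) := by
  ext n
  simp [sigmaOneSub, ← Functor.map_comp]

def homSumToSigma (C : A) {κ : Type*} [DecidableEq κ] (Y : κ → A) [HasCoproduct Y] :
    (⨁ k, C ⟶ Y k) →+ (C ⟶ ∐ Y) :=
  toAddMonoid fun k => Preadditive.rightComp C (Sigma.ι Y k)

@[simp]
lemma homSumToSigma_of {C : A} {κ : Type*} [DecidableEq κ] {Y : κ → A} [HasCoproduct Y] (k : κ)
    (a : C ⟶ Y k) : homSumToSigma C Y (of _ k a) = a ≫ Sigma.ι Y k :=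
  toAddMonoid_of _ _ _

lemma IsCompactObject.bijective_homSumToSigma [HasCountableCoproducts A] {C : A}
    (hC : IsCompactObject.{w} C) {κ : Type} [Countable κ] [DecidableEq κ] (Y : κ → A) :
    Function.Bijective (homSumToSigma C Y) := by
  let e : ULift.{w} κ ≃ κ := Equiv.ulift
  let E : (⨁ i, C ⟶ (Y ∘ e) i) ≃+ ⨁ k, C ⟶ Y k := equivCongrLeft e
  have hE : ∀ x,
      homSumToSigma C Y (E x) = homSumToSigma C (Y ∘ e) x ≫ (Sigma.reindex e Y).hom := by
    intro x
    induction x using DirectSum.induction_on with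
    | zero => simp
    | of i a =>
      have hEof : E (of _ i a) = of _ (e i) a :=
        equivCongrLeft_of (β := fun i => C ⟶ (Y ∘ e) i) e i.down a
      erw [hEof, homSumToSigma_of, homSumToSigma_of, Category.assoc, Sigma.ι_reindex_hom]
    | add x y hx hy => simp [hx, hy]
  have hpost : Function.Bijective fun u : C ⟶ ∐ (Y ∘ e) => u ≫ (Sigma.reindex e Y).hom :=
    ⟨fun _ _ h => (cancel_mono _).1 h, fun u => ⟨u ≫ (Sigma.reindex e Y).inv, by simp⟩⟩
  have hU : Function.Bijective (homSumToSigma C (Y ∘ e)) := hC _ inferInstance _ inferInstance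
  have hfactor : ⇑(homSumToSigma C Y) =
      ((fun u => u ≫ (Sigma.reindex e Y).hom) ∘ homSumToSigma C (Y ∘ e)) ∘ E.symm := by
    funext x
    obtain ⟨x, rfl⟩ := E.surjective x
    simp [hE]
  rw [hfactor]
  exact (hpost.comp hU).comp E.symm.bijective

end Preadditive

section Sequence

variable {A : Type*} [Category A] [Preadditive A] (C : A) {Y : ℕ → A} (ψ : ∀ n, Y n ⟶ Y (n + 1))

def homSumSucc : (⨁ n, C ⟶ Y n) →+ (⨁ n, C ⟶ Y n) :=
  toAddMonoid fun n => (of (fun m => C ⟶ Y m) (n + 1)).comp (Preadditive.rightComp C (ψ n))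

variable {C ψ}

@[simp]
lemma homSumSucc_of (n : ℕ) (a : C ⟶ Y n) :
    homSumSucc C ψ (of _ n a) = of (fun m => C ⟶ Y m) (n + 1) (a ≫ ψ n) :=
  toAddMonoid_of _ _ _

lemma homSumSucc_apply_zero (x : ⨁ n, C ⟶ Y n) : homSumSucc C ψ x 0 = 0 := by
  induction x using DirectSum.induction_on with
  | zero => simp
  | of n a => simp [of_eq_of_ne]
  | add x y hx hy => simp [hx, hy]

lemma homSumSucc_apply_succ (x : ⨁ n, C ⟶ Y n) (n : ℕ) :
    homSumSucc C ψ x (n + 1) = x n ≫ ψ n := by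
  induction x using DirectSum.induction_on with
  | zero => simp
  | of m a =>
    by_cases h : m = n
    · subst h; simp
    · rw [homSumSucc_of, of_eq_of_ne _ _ _ (by omega), of_eq_of_ne _ _ _ (Ne.symm h), zero_comp]
  | add x y hx hy => simp [hx, hy]

lemma homSumToSigma_comp_sigmaOneSub [HasCoproduct Y] (x : ⨁ n, C ⟶ Y n) :
    homSumToSigma C Y x ≫ sigmaOneSub ψ = homSumToSigma C Y (x - homSumSucc C ψ x) := by
  induction x using DirectSum.induction_on with
  | zero => simp
  | of n a => simp [sigmaOneSub, Preadditive.comp_sub]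
  | add x y hx hy => simp only [map_add, Preadditive.add_comp, hx, hy, map_sub]; abel

lemma apply_eq_of_eq_homSumSucc_add_of {x : ⨁ n, C ⟶ Y n} {N : ℕ} {g : C ⟶ Y N}
    (hx : x = homSumSucc C ψ x + of _ N g) {M : ℕ} (hM : N ≤ M) :
    x M = g ≫ Functor.OfSequence.map ψ N M hM := by
  have below : ∀ n < N, x n = 0 := by
    intro n hn
    induction n with
    | zero => rw [hx]; simp [homSumSucc_apply_zero, of_eq_of_ne, hn.ne]
    | succ n ih => rw [hx]; simp [homSumSucc_apply_succ, ih (by omega), of_eq_of_ne, hn.ne]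
  induction M, hM using Nat.le_induction with
  | base =>
    rw [hx]
    cases N with
    | zero => simp [homSumSucc_apply_zero, Functor.OfSequence.map_id]
    | succ N => simp [homSumSucc_apply_succ, below N N.lt_succ_self, Functor.OfSequence.map_id]
  | succ M hM ih =>
    rw [hx, DirectSum.add_apply, homSumSucc_apply_succ, ih, of_eq_of_ne _ _ _ (by omega),
      add_zero, Category.assoc, ← Functor.OfSequence.map_le_succ ψ M,
      ← Functor.OfSequence.map_comp]

lemma eq_zero_of_eq_homSumSucc {x : ⨁ n, C ⟶ Y n} (hx : x = homSumSucc C ψ x) : x = 0 := by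
  ext M
  have hx' : x = homSumSucc C ψ x + of _ 0 0 := by rw [map_zero, add_zero, ← hx]
  simpa using apply_eq_of_eq_homSumSucc_add_of hx' M.zero_le

lemma DirectSum.exists_forall_ge_apply_eq_zero {β : ℕ → Type*} [∀ n, AddCommMonoid (β n)]
    (x : ⨁ n, β n) : ∃ M, ∀ n, M ≤ n → x n = 0 := by
  classical
  refine ⟨x.support.sup id + 1, fun n hn => DFinsupp.notMem_support_iff.1 fun hx => ?_⟩
  have := Finset.le_sup (f := id) hx
  simp only [id] at this
  omega

lemma exists_comp_ι_comp_eq_homSumToSigma_comp [HasCoproduct Y] {Z : A} {π : ∐ Y ⟶ Z}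
    (hπ : ∀ n, Sigma.ι Y n ≫ π = ψ n ≫ Sigma.ι Y (n + 1) ≫ π) (x : ⨁ n, C ⟶ Y n) :
    ∃ (N : ℕ) (g : C ⟶ Y N), g ≫ Sigma.ι Y N ≫ π = homSumToSigma C Y x ≫ π := by
  induction x using DirectSum.induction_on with
  | zero => exact ⟨0, 0, by simp⟩
  | of n a => exact ⟨n, a, by simp⟩
  | add x y hx hy =>
    obtain ⟨N₁, g₁, h₁⟩ := hx
    obtain ⟨N₂, g₂, h₂⟩ := hy
    refine ⟨max N₁ N₂, g₁ ≫ Functor.OfSequence.map ψ _ _ (le_max_left N₁ N₂) +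
      g₂ ≫ Functor.OfSequence.map ψ _ _ (le_max_right N₁ N₂), ?_⟩
    simp only [map_add, Preadditive.add_comp, Category.assoc, ← h₁, ← h₂,
      ← ι_comp_eq_map_comp_ι_comp hπ]

section Compact

variable [HasCoproduct Y] (hC : Function.Bijective (homSumToSigma C Y))
include hC

lemma eq_zero_of_comp_sigmaOneSub_eq_zero {u : C ⟶ ∐ Y} (hu : u ≫ sigmaOneSub ψ = 0) :
    u = 0 := by
  obtain ⟨x, rfl⟩ := hC.2 u
  rw [homSumToSigma_comp_sigmaOneSub, ← map_zero (homSumToSigma C Y)] at hu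
  rw [eq_zero_of_eq_homSumSucc (sub_eq_zero.1 (hC.1 hu)), map_zero]

lemma exists_comp_map_eq_zero_of_comp_sigmaOneSub_eq {N : ℕ} {g : C ⟶ Y N} {u : C ⟶ ∐ Y}
    (hu : u ≫ sigmaOneSub ψ = g ≫ Sigma.ι Y N) :
    ∃ M, ∃ h : N ≤ M, g ≫ Functor.OfSequence.map ψ N M h = 0 := by
  obtain ⟨x, rfl⟩ := hC.2 u
  rw [homSumToSigma_comp_sigmaOneSub, ← homSumToSigma_of] at hu
  have hx : x = homSumSucc C ψ x + of _ N g := by rw [← hC.1 hu]; abel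
  obtain ⟨M, hM⟩ := DirectSum.exists_forall_ge_apply_eq_zero x
  exact ⟨max N M, le_max_left N M,
    (apply_eq_of_eq_homSumSucc_add_of hx _).symm.trans (hM _ (le_max_right N M))⟩

end Compact

lemma eq_zero_of_comp_map_sigmaOneSub_eq_zero {B : Type*} [Category B] [Preadditive B]
    (F : A ⥤ B) [F.Additive] [HasCoproduct Y] [HasCoproduct fun n => F.obj (Y n)]
    [IsIso (sigmaComparison F Y)] {C : B}
    (hC : Function.Bijective (homSumToSigma C fun n => F.obj (Y n))) {v : C ⟶ F.obj (∐ Y)}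
    (hv : v ≫ F.map (sigmaOneSub ψ) = 0) : v = 0 := by
  have hv' : (v ≫ inv (sigmaComparison F Y)) ≫ sigmaOneSub (fun n => F.map (ψ n)) = 0 := by
    rw [← cancel_mono (sigmaComparison F Y), Category.assoc, Category.assoc,
      sigmaOneSub_comp_sigmaComparison, IsIso.inv_hom_id_assoc, hv, zero_comp]
  simpa using eq_zero_of_comp_sigmaOneSub_eq_zero hC hv'

end Sequence

section Triangle

variable {Y : ℕ → T} {ψ : ∀ n, Y n ⟶ Y (n + 1)} {X : T} {π : ∐ Y ⟶ X}
  {δ : X ⟶ (∐ Y)⟦(1 : ℤ)⟧} (hT : Triangle.mk (sigmaOneSub ψ) π δ ∈ distTriang T) {C : T}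
  (hC : IsCompactObject.{w} C)
include hT hC

lemma exists_comp_ι_comp_eq_of_mem_distTriang (g : C ⟶ X) :
    ∃ (N : ℕ) (g' : C ⟶ Y N), g' ≫ Sigma.ι Y N ≫ π = g := by
  have hδ : g ≫ δ = 0 :=
    eq_zero_of_comp_map_sigmaOneSub_eq_zero (ψ := ψ) (shiftFunctor T (1 : ℤ))
      (hC.bijective_homSumToSigma _)
      (by rw [Category.assoc]; exact (g ≫= comp_distTriang_mor_zero₃₁ _ hT).trans comp_zero)
  obtain ⟨u, rfl⟩ := Triangle.coyoneda_exact₃ _ hT g hδ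
  obtain ⟨x, rfl⟩ := (hC.bijective_homSumToSigma Y).2 u
  exact exists_comp_ι_comp_eq_homSumToSigma_comp (statement5_vanish ψ hT) x

lemma exists_comp_map_eq_zero_of_mem_distTriang {N : ℕ} {g : C ⟶ Y N}
    (hg : g ≫ Sigma.ι Y N ≫ π = 0) :
    ∃ M, ∃ h : N ≤ M, g ≫ Functor.OfSequence.map ψ N M h = 0 := by
  obtain ⟨u, hu⟩ :=
    Triangle.coyoneda_exact₂ _ hT (g ≫ Sigma.ι Y N) ((Category.assoc _ _ _).trans hg)
  exact exists_comp_map_eq_zero_of_comp_sigmaOneSub_eq (hC.bijective_homSumToSigma Y) hu.symm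

end Triangle

/-- if `X` is a homotopy colimit of the sequence `(Xₙ)` and `C` is compact, then
the canonical map `colimₙ Hom(C, Xₙ) → Hom(C, X)` is bijective. -/
theorem statement_5 (Xs : ℕ → T) (φ : ∀ n, Xs n ⟶ Xs (n + 1)) (X : T)
    (π : (∐ Xs) ⟶ X) (δ : X ⟶ (∐ Xs)⟦(1 : ℤ)⟧)
    (hT : Triangle.mk (Sigma.desc (fun n => Sigma.ι Xs n - φ n ≫ Sigma.ι Xs (n + 1))) π δ ∈
      (distTriang T))
    (C : T) (hC : IsCompactObject.{w} C) :
    Function.Bijective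
      (colimit.desc (Functor.ofSequence φ ⋙ coyoneda.obj (op C))
        (statement5Cocone C φ π (statement5_vanish φ hT))) := by
  have hc : IsColimit (statement5Cocone C φ π (statement5_vanish φ hT)) := by
    refine Types.FilteredColimit.isColimitOf' _ _ (fun g => ?_) (fun N g₁ g₂ hg => ?_)
    · obtain ⟨N, g', rfl⟩ := exists_comp_ι_comp_eq_of_mem_distTriang (ψ := φ) hT hC g
      exact ⟨N, g', rfl⟩
    · change C ⟶ Xs N at g₁ g₂
      change g₁ ≫ Sigma.ι Xs N ≫ π = g₂ ≫ Sigma.ι Xs N ≫ π at hg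
      obtain ⟨M, hNM, hM⟩ := exists_comp_map_eq_zero_of_mem_distTriang (ψ := φ) hT hC
        (g := g₁ - g₂) (by rw [Preadditive.sub_comp, hg, sub_self])
      rw [Preadditive.sub_comp, sub_eq_zero] at hM
      exact ⟨M, homOfLE hNM, hM⟩
  exact (isIso_iff_bijective _).1 ((colimit.isColimit _).coconePointUniqueUpToIso hc).isIso_hom
end
end

section
/- Let T be a pretriangulated category admitting countable coproducts, let φₙ : Xₙ → Xₙ₊₁ (n ∈ ℕ) be a sequence of morphisms in T such that each Xₙ is a coproduct of compact objects, and let X be an object fitting into a distinguished triangle ∐ₙ Xₙ →(1−φ) ∐ₙ Xₙ →π X →δ (∐ₙ Xₙ)[1]. Then a morphism f : X → Y in T is phantom if and only if f factors through the connecting morphism δ : X → (∐ₙ Xₙ)[1], i.e., f = δ ≫ h for some h : (∐ₙ Xₙ)[1] → Y. -/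
/-!
A phantom `f` kills `π`, because `∐ₙ Xₙ` is a coproduct of compact objects; by exactness of
`Hom(-, Y)` on the triangle it then factors through `δ`. Conversely `δ` is itself phantom: for
compact `C`, `Hom(C, -)` turns `(1 - φ)⟦1⟧` into `1 - S` on `⨁ₙ Hom(C, Xₙ⟦1⟧)`, where `S` moves
the `n`-th summand to the `(n+1)`-st, and `1 - S` is injective because a fixed point of `S` has
no lowest nonzero component. Since `δ ≫ (1 - φ)⟦1⟧ = 0`, every `g ≫ δ` with `C` compact vanishes.
-/

universe w v u

open CategoryTheory CategoryTheory.Limits CategoryTheory.Pretriangulated Opposite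

noncomputable section

variable {T : Type u} [Category.{v} T] [Preadditive T] [HasZeroObject T] [HasShift T ℤ]
  [∀ n : ℤ, (shiftFunctor T n).Additive] [Pretriangulated T] [HasCountableCoproducts T]

open scoped DirectSum

namespace DirectSum

variable {M : ℕ → Type*} [∀ n, AddCommMonoid (M n)] (ρ : ∀ n, M n →+ M (n + 1))

def shiftSucc : (⨁ n, M n) →+ ⨁ n, M n :=
  toAddMonoid fun n => (of M (n + 1)).comp (ρ n)

@[simp]
lemma shiftSucc_of (n : ℕ) (m : M n) : shiftSucc ρ (of M n m) = of M (n + 1) (ρ n m) :=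
  toAddMonoid_of _ _ _

lemma shiftSucc_apply_zero (y : ⨁ n, M n) : shiftSucc ρ y 0 = 0 := by
  induction y using DirectSum.induction_on with
  | zero => simp
  | of j m => rw [shiftSucc_of, of_eq_of_ne _ _ _ (Nat.succ_ne_zero j).symm]
  | add a b ha hb => rw [map_add, add_apply, ha, hb, add_zero]

lemma shiftSucc_apply_succ (y : ⨁ n, M n) (n : ℕ) : shiftSucc ρ y (n + 1) = ρ n (y n) := by
  induction y using DirectSum.induction_on with
  | zero => simp
  | of j m =>
    rw [shiftSucc_of]
    obtain rfl | hjn := eq_or_ne j n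
    · simp only [of_eq_same]
    · rw [of_eq_of_ne _ _ _ (by omega), of_eq_of_ne _ _ _ hjn.symm, map_zero]
  | add a b ha hb => rw [map_add, add_apply, add_apply, ha, hb, map_add]

lemma eq_zero_of_shiftSucc_eq_self {x : ⨁ n, M n} (hx : shiftSucc ρ x = x) : x = 0 := by
  refine DFinsupp.ext fun n => ?_
  rw [zero_apply]
  induction n with
  | zero => rw [← hx, shiftSucc_apply_zero]
  | succ n ih => rw [← hx, shiftSucc_apply_succ, ih, map_zero]

end DirectSum

section Preadditive

variable {D : Type u} [Category.{v} D] [Preadditive D]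

def oneSubShift {Z : ℕ → D} [HasCoproduct Z] (φ : ∀ n, Z n ⟶ Z (n + 1)) : ∐ Z ⟶ ∐ Z :=
  Sigma.desc fun n => Sigma.ι Z n - φ n ≫ Sigma.ι Z (n + 1)

@[simp]
lemma ι_oneSubShift {Z : ℕ → D} [HasCoproduct Z] (φ : ∀ n, Z n ⟶ Z (n + 1)) (n : ℕ) :
    Sigma.ι Z n ≫ oneSubShift φ = Sigma.ι Z n - φ n ≫ Sigma.ι Z (n + 1) :=
  Sigma.ι_desc _ _

lemma sigmaComparison_comp_map_oneSubShift {Z : ℕ → D} [HasCoproduct Z]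
    {D' : Type*} [Category D'] [Preadditive D']
    (G : D ⥤ D') [G.Additive] [HasCoproduct fun n => G.obj (Z n)]
    (φ : ∀ n, Z n ⟶ Z (n + 1)) :
    sigmaComparison G Z ≫ G.map (oneSubShift φ) =
      oneSubShift (fun n => G.map (φ n)) ≫ sigmaComparison G Z := by
  refine Sigma.hom_ext _ _ fun n => ?_
  rw [ι_comp_sigmaComparison_assoc, ← G.map_comp, ι_oneSubShift, ← Category.assoc, ι_oneSubShift,
    G.map_sub, G.map_comp, Preadditive.sub_comp, Category.assoc, ι_comp_sigmaComparison,
    ι_comp_sigmaComparison]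

namespace IsCompactObject

lemma bijective_of_countable [HasCountableCoproducts D] {C : D} (hC : IsCompactObject.{w} C)
    {ι : Type} [Countable ι] [DecidableEq ι] (Y : ι → D) :
    Function.Bijective
      ⇑(DirectSum.toAddMonoid (fun i => Preadditive.rightComp C (Sigma.ι Y i))) := by
  let Y' : ULift.{w} ι → D := fun i => Y i.down
  let q : (⨁ i, C ⟶ Y i) ≃+ ⨁ i : ULift.{w} ι, C ⟶ Y' i :=
    DirectSum.equivCongrLeft Equiv.ulift.symm
  let r : (∐ Y') ≅ ∐ Y := Sigma.reindex Equiv.ulift Y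
  have hq (i : ι) (m : C ⟶ Y i) :
      q (DirectSum.of _ i m) = DirectSum.of (fun i : ULift.{w} ι => C ⟶ Y' i) (ULift.up i) m :=
    DirectSum.equivCongrLeft_of (β := fun i => C ⟶ Y i) Equiv.ulift.symm (ULift.up i) m
  have hfactor : (DirectSum.toAddMonoid fun i => Preadditive.rightComp C (Sigma.ι Y i)) =
      ((Preadditive.rightComp C r.hom).comp
        (DirectSum.toAddMonoid fun i => Preadditive.rightComp C (Sigma.ι Y' i))).comp q := by
    refine DirectSum.addHom_ext fun i m => ?_
    simp only [AddMonoidHom.coe_comp, Function.comp_apply, AddMonoidHom.coe_coe, hq,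
      DirectSum.toAddMonoid_of, Preadditive.rightComp, AddMonoidHom.mk'_apply, Category.assoc]
    exact congrArg (m ≫ ·) (Sigma.ι_reindex_hom Equiv.ulift Y (ULift.up i)).symm
  have hr : Function.Bijective (Preadditive.rightComp C r.hom) :=
    Function.bijective_iff_has_inverse.2 ⟨(· ≫ r.inv), fun a => by simp [Preadditive.rightComp],
      fun a => by simp [Preadditive.rightComp]⟩
  rw [hfactor]
  exact hr.comp ((hC _ inferInstance Y' inferInstance).comp q.bijective)

lemma eq_zero_of_comp_oneSubShift_eq_zero [HasCountableCoproducts D] {C : D}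
    (hC : IsCompactObject.{w} C) {Z : ℕ → D} (φ : ∀ n, Z n ⟶ Z (n + 1))
    {v : C ⟶ ∐ Z} (hv : v ≫ oneSubShift φ = 0) : v = 0 := by
  let t := DirectSum.toAddMonoid fun n => Preadditive.rightComp C (Sigma.ι Z n)
  let ρ n := Preadditive.rightComp C (φ n)
  have ht : Function.Bijective t := hC.bijective_of_countable Z
  have ht_comp (y : ⨁ n, C ⟶ Z n) : t y ≫ oneSubShift φ = t (y - DirectSum.shiftSucc ρ y) := by
    induction y using DirectSum.induction_on with
    | zero => simp
    | of n m => simp [t, ρ, Preadditive.rightComp, Preadditive.comp_sub]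
    | add a b ha hb =>
      rw [map_add, Preadditive.add_comp, ha, hb, ← map_add, map_add (DirectSum.shiftSucc ρ)]
      congr 1
      abel
  obtain ⟨x, rfl⟩ := ht.2 v
  have hx : x - DirectSum.shiftSucc ρ x = 0 := ht.1 (by rw [← ht_comp, hv, map_zero])
  rw [DirectSum.eq_zero_of_shiftSucc_eq_self ρ (sub_eq_zero.1 hx).symm, map_zero]

end IsCompactObject

def IsPhantom {X Y : D} (f : X ⟶ Y) : Prop :=
  ∀ C : D, IsCompactObject.{w} C → ∀ g : C ⟶ X, g ≫ f = 0

namespace IsPhantom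

variable {X Y : D} {f : X ⟶ Y}

lemma comp (hf : IsPhantom.{w} f) {Y' : D} (h : Y ⟶ Y') : IsPhantom.{w} (f ≫ h) :=
  fun C hC g => by rw [← Category.assoc, hf C hC g, zero_comp]

lemma comp_eq_zero_of_iso_sigma (hf : IsPhantom.{w} f) {κ : Type w} {Z : κ → D}
    [HasCoproduct Z] (hZ : ∀ k, IsCompactObject.{w} (Z k)) {W : D} (e : W ≅ ∐ Z)
    (g : W ⟶ X) : g ≫ f = 0 := by
  have h : e.inv ≫ g ≫ f = 0 :=
    Sigma.hom_ext _ _ fun k => by simpa using hf (Z k) (hZ k) (Sigma.ι Z k ≫ e.inv ≫ g)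
  rw [← e.hom_inv_id_assoc g, Category.assoc, Category.assoc, h, comp_zero]

end IsPhantom

end Preadditive

lemma isPhantom_mor₃_of_oneSubShift {Xs : ℕ → T} (φ : ∀ n, Xs n ⟶ Xs (n + 1)) {X : T}
    {π : ∐ Xs ⟶ X} {δ : X ⟶ (∐ Xs)⟦(1 : ℤ)⟧}
    (hT : Triangle.mk (oneSubShift φ) π δ ∈ distTriang T) : IsPhantom.{w} δ := by
  intro C hC g
  let c := sigmaComparison (shiftFunctor T (1 : ℤ)) Xs
  have : IsIso c := by dsimp only [c]; infer_instance
  have hc : inv c ≫ oneSubShift (fun n => (φ n)⟦(1 : ℤ)⟧') =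
      (oneSubShift φ)⟦(1 : ℤ)⟧' ≫ inv c := by
    rw [IsIso.eq_comp_inv, Category.assoc, ← sigmaComparison_comp_map_oneSubShift,
      IsIso.inv_hom_id_assoc]
  have hδ : δ ≫ (oneSubShift φ)⟦(1 : ℤ)⟧' = 0 := comp_distTriang_mor_zero₃₁ _ hT
  have hgδ : (g ≫ δ ≫ inv c) ≫ oneSubShift (fun n => (φ n)⟦(1 : ℤ)⟧') = 0 := by
    rw [Category.assoc, Category.assoc, hc, ← Category.assoc δ, hδ, zero_comp, comp_zero]
  rw [← cancel_mono (inv c), Category.assoc, zero_comp]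
  exact hC.eq_zero_of_comp_oneSubShift_eq_zero _ hgδ

/-- if `X` is a homotopy colimit of a sequence `(Xₙ)` of coproducts of compact
objects, with connecting morphism `δ : X ⟶ (∐ₙ Xₙ)⟦1⟧`, then a morphism `f : X ⟶ Y` is
phantom if and only if it factors through `δ`. -/
theorem statement_10 (Xs : ℕ → T) (φ : ∀ n, Xs n ⟶ Xs (n + 1)) (X : T)
    (π : (∐ Xs) ⟶ X) (δ : X ⟶ (∐ Xs)⟦(1 : ℤ)⟧)
    (hT : Triangle.mk (Sigma.desc (fun n => Sigma.ι Xs n - φ n ≫ Sigma.ι Xs (n + 1))) π δ ∈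
      (distTriang T))
    (hXs : ∀ n, ∃ (κ : Type w) (Z : κ → T) (_ : HasCoproduct Z),
      (∀ k, IsCompactObject.{w} (Z k)) ∧ Nonempty (Xs n ≅ ∐ Z))
    (Y : T) (f : X ⟶ Y) :
    (∀ Cc : T, IsCompactObject.{w} Cc → ∀ g : Cc ⟶ X, g ≫ f = 0) ↔
      ∃ h : (∐ Xs)⟦(1 : ℤ)⟧ ⟶ Y, f = δ ≫ h := by
  change IsPhantom.{w} f ↔ _
  constructor
  · intro hf
    have hπf : π ≫ f = 0 := Sigma.hom_ext _ _ fun n => by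
      obtain ⟨κ, Z, _, hZ, ⟨e⟩⟩ := hXs n
      rw [comp_zero, ← Category.assoc]
      exact hf.comp_eq_zero_of_iso_sigma hZ e _
    exact Triangle.yoneda_exact₃ _ hT f hπf
  · rintro ⟨h, rfl⟩
    exact (isPhantom_mor₃_of_oneSubShift φ hT).comp h

end
end

section
/- Let A be a commutative noetherian ring with only finitely many maximal ideals (a semi-local ring). Let X₀ → X₁ → X₂ → ⋯ be a sequence of A-modules of finite length which is a Cauchy sequence, meaning: for every A-module C of finite length there exists N such that the induced map Hom_A(C, Xᵢ) → Hom_A(C, Xⱼ) is bijective for all j ≥ i ≥ N. Then the colimit colimₙ Xₙ is an artinian A-module. -/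
/-!
Let `J` be the Jacobson radical of `A`. Every finite length module is killed by a power of `J`,
so the colimit `X` is `J`-power torsion. Since `A` is semi-local, `A ⧸ J` has finite length, and the
Cauchy condition for `C = A ⧸ J` says that `Hom(A ⧸ J, Xₙ) = Xₙ[J]` eventually surjects onto all
later `Xₘ[J]`; hence `X[J]` is a quotient of a single `Xₙ[J]` and is artinian. Melkersson's lemma
(a `J`-power torsion module with artinian `J`-torsion is artinian, for `J` finitely generated)
finishes the proof.
-/

universe u

open CategoryTheory CategoryTheory.Limits

theorem exists_forall_ge_eq_of_antitone₂ {α : Type*} [PartialOrder α] [WellFoundedLT α]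
    {f : ℕ → ℕ → α} (hf : Antitone f) (hf' : ∀ i, Antitone (f i)) :
    ∃ T, ∀ i, T ≤ i → ∀ k, f i k = f T k := by
  obtain ⟨t, ht⟩ := WellFoundedLT.antitone_chain_condition (f := fun i => f i i)
    fun i j hij => (hf hij j).trans (hf' i hij)
  choose c hc using fun k => WellFoundedLT.antitone_chain_condition (f := fun i => f i k)
    fun i j hij => hf hij k
  have hdiag : ∀ i k, t ≤ i → t ≤ k → f i k = f t t := fun i k hi hk =>
    le_antisymm ((hf hi k).trans (hf' t hk)) <|
      calc f t t = f (max i k) (max i k) := ht _ (hi.trans (le_max_left _ _))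
        _ ≤ f i k := (hf (le_max_left _ _) _).trans (hf' i (le_max_right _ _))
  refine ⟨max t ((Finset.range t).sup c), fun i hi k => ?_⟩
  rcases le_or_gt t k with hk | hk
  · rw [hdiag i k ((le_max_left _ _).trans hi) hk, hdiag _ k (le_max_left _ _) hk]
  · have hck : c k ≤ max t ((Finset.range t).sup c) :=
      (Finset.le_sup (Finset.mem_range.mpr hk)).trans (le_max_right _ _)
    rw [← hc k i (hck.trans hi), ← hc k _ hck]

namespace Submodule

variable {A M : Type*} [CommRing A] [AddCommGroup M] [Module A M]

def powTorsionLayer (x : A) (N : Submodule A M) (k : ℕ) : Submodule A M :=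
  (N ⊓ torsionBy A M (x ^ (k + 1))).map (LinearMap.lsmul A M (x ^ k))

variable {x : A}

theorem mem_powTorsionLayer {N : Submodule A M} {k : ℕ} {y : M} :
    y ∈ powTorsionLayer x N k ↔ ∃ z ∈ N, x ^ (k + 1) • z = 0 ∧ x ^ k • z = y := by
  simp [powTorsionLayer, and_assoc]

theorem powTorsionLayer_le_torsionBy (N : Submodule A M) (k : ℕ) :
    powTorsionLayer x N k ≤ torsionBy A M x := by
  rintro _ ⟨z, ⟨-, hz⟩, rfl⟩
  rw [SetLike.mem_coe, mem_torsionBy_iff] at hz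
  rwa [mem_torsionBy_iff, LinearMap.lsmul_apply, smul_smul, ← pow_succ']

theorem powTorsionLayer_mono (k : ℕ) :
    Monotone fun N : Submodule A M => powTorsionLayer x N k :=
  fun _ _ h => map_mono (inf_le_inf_right _ h)

theorem powTorsionLayer_antitone (N : Submodule A M) : Antitone (powTorsionLayer x N) := by
  refine antitone_nat_of_succ_le fun k => ?_
  rintro _ ⟨z, ⟨hzN, hz⟩, rfl⟩
  rw [SetLike.mem_coe, mem_torsionBy_iff] at hz
  refine ⟨x • z, ⟨N.smul_mem x hzN, ?_⟩, ?_⟩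
  · rwa [SetLike.mem_coe, mem_torsionBy_iff, smul_smul, ← pow_succ]
  · simp only [LinearMap.lsmul_apply, smul_smul, ← pow_succ]

theorem le_of_powTorsionLayer_le (htor : ∀ y : M, ∃ k : ℕ, x ^ k • y = 0)
    {N N' : Submodule A M} (hN : N' ≤ N)
    (h : ∀ k, powTorsionLayer x N k ≤ powTorsionLayer x N' k) : N ≤ N' := by
  suffices ∀ k, ∀ y ∈ N, x ^ k • y = 0 → y ∈ N' from fun y hy =>
    (htor y).elim fun k hk => this k y hy hk
  intro k
  induction k with
  | zero =>
    intro y _ hy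
    rw [pow_zero, one_smul] at hy
    exact hy ▸ N'.zero_mem
  | succ k ih =>
    intro y hy hky
    obtain ⟨z, hzN', hz, hzy⟩ :=
      mem_powTorsionLayer.mp (h k (mem_powTorsionLayer.mpr ⟨y, hy, hky, rfl⟩))
    have : y - z ∈ N' := ih _ (N.sub_mem hy (hN hzN')) (by rw [smul_sub, hzy, sub_self])
    simpa using N'.add_mem this hzN'

/-- Melkersson's lemma for a principal ideal. Nested submodules with the same layers are equal,
and the layers `powTorsionLayer x Nᵢ k` of a descending chain form a doubly antitone family in the
artinian `M[x]`, which stabilizes in `i` uniformly in `k`. -/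
theorem isArtinian_of_isArtinian_torsionBy (htor : ∀ y : M, ∃ k : ℕ, x ^ k • y = 0)
    [IsArtinian A (torsionBy A M x)] : IsArtinian A M := by
  refine monotone_stabilizes_iff_artinian.mp fun N => ?_
  have : WellFoundedLT (Set.Iic (torsionBy A M x)) :=
    (mapIic (torsionBy A M x)).symm.toOrderEmbedding.wellFoundedLT
  obtain ⟨T, hT⟩ := exists_forall_ge_eq_of_antitone₂
    (f := fun i k => (⟨powTorsionLayer x (N i) k, powTorsionLayer_le_torsionBy _ k⟩ :
      Set.Iic (torsionBy A M x)))
    (fun i j hij k => powTorsionLayer_mono k (N.monotone hij))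
    (fun i => powTorsionLayer_antitone (N i))
  refine ⟨T, fun i hi => le_antisymm (N.monotone hi) ?_⟩
  exact le_of_powTorsionLayer_le htor (N.monotone hi)
    fun k => (congrArg Subtype.val (hT i hi k)).ge

theorem isArtinian_of_isArtinian_torsionBySet_finset (s : Finset A)
    (htor : ∀ y : M, ∀ a ∈ s, ∃ k : ℕ, a ^ k • y = 0)
    [IsArtinian A (torsionBySet A M s)] : IsArtinian A M := by
  classical
  induction s using Finset.induction_on generalizing M with
  | empty =>
    have : torsionBySet A M (∅ : Finset A) = ⊤ :=
      eq_top_iff.mpr fun y _ => (mem_torsionBySet_iff _ _).mpr fun ⟨a, ha⟩ => by simp at ha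
    exact isArtinian_of_linearEquiv ((LinearEquiv.ofEq _ _ this).trans topEquiv)
  | insert a s _ ih =>
    set P := torsionBy A M a
    let f : torsionBySet A P s →ₗ[A] M := P.subtype ∘ₗ (torsionBySet A P s).subtype
    have hf : ∀ y, f y ∈ torsionBySet A M (insert a s : Finset A) := by
      rintro ⟨⟨y, hyP⟩, hy⟩
      rw [mem_torsionBySet_iff] at hy ⊢
      rintro ⟨b, hb⟩
      rw [Finset.mem_coe, Finset.mem_insert] at hb
      rcases hb with rfl | hb
      · exact (mem_torsionBy_iff _ _).mp hyP
      · exact congrArg Subtype.val (hy ⟨b, hb⟩)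
    have : IsArtinian A (torsionBySet A P s) := isArtinian_of_injective (f.codRestrict _ hf)
      ((LinearMap.injective_codRestrict_iff hf).mpr (P.injective_subtype.comp Subtype.val_injective))
    have : IsArtinian A P := ih (fun y b hb => (htor y b (Finset.mem_insert_of_mem hb)).imp
      fun k hk => Subtype.ext hk)
    exact isArtinian_of_isArtinian_torsionBy fun y => htor y a (Finset.mem_insert_self a s)

/-- Melkersson's lemma. -/
theorem isArtinian_of_isArtinian_torsionBySet {I : Ideal A} (hI : I.FG)
    (htor : ∀ y : M, ∃ k : ℕ, I ^ k ≤ Ideal.torsionOf A M y)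
    [IsArtinian A (torsionBySet A M I)] : IsArtinian A M := by
  obtain ⟨s, rfl⟩ := hI
  have : IsArtinian A (torsionBySet A M s) := by rwa [torsionBySet_eq_torsionBySet_span]
  refine isArtinian_of_isArtinian_torsionBySet_finset s fun y a ha => ?_
  obtain ⟨k, hk⟩ := htor y
  exact ⟨k, hk (Ideal.pow_mem_pow (subset_span ha) k)⟩

end Submodule

section FiniteLength

variable {A : Type*} [CommRing A]

theorem exists_pow_jacobson_le_annihilator {M : Type*} [AddCommGroup M] [Module A M]
    (hM : IsFiniteLength A M) : ∃ k : ℕ, Ring.jacobson A ^ k ≤ Module.annihilator A M := by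
  induction hM with
  | of_subsingleton => exact ⟨0, by simp [Module.annihilator_eq_top_iff.mpr]⟩
  | @of_simple_quotient M _ _ N _ _ ih =>
    obtain ⟨k, hk⟩ := ih
    refine ⟨k + 1, Ideal.mul_le.mpr fun r hr s hs => Module.mem_annihilator.mpr fun m => ?_⟩
    have hsm : s • m ∈ N := by
      rw [← Submodule.Quotient.mk_eq_zero, Submodule.Quotient.mk_smul]
      exact Module.mem_annihilator.mp (IsSemisimpleModule.jacobson_le_annihilator A _ hs) _
    rw [mul_smul]
    exact congrArg Subtype.val (Module.mem_annihilator.mp (hk hr) ⟨s • m, hsm⟩)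

theorem isFiniteLength_quotient_jacobson (h : {I : Ideal A | I.IsMaximal}.Finite) :
    IsFiniteLength A (A ⧸ Ring.jacobson A) := by
  have := h.to_subtype
  have (I : {I : Ideal A | I.IsMaximal}) : I.1.IsMaximal := I.2
  have (I : {I : Ideal A | I.IsMaximal}) : IsSemisimpleRing (A ⧸ I.1) :=
    let _ := Ideal.Quotient.field I.1
    inferInstance
  have : IsSemisimpleRing (A ⧸ Ring.jacobson A) := by
    rw [Ring.jacobson_eq_sInf_isMaximal, sInf_eq_iInf']
    exact (Ideal.quotientInfRingEquivPiQuotient _ fun I J ne ↦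
      Ideal.isCoprime_of_isMaximal <| Subtype.coe_ne_coe.mpr ne).symm.isSemisimpleRing
  have : IsArtinian A (A ⧸ Ring.jacobson A) :=
    isArtinian_of_surjective_algebraMap (Ideal.Quotient.mk_surjective (I := Ring.jacobson A))
  exact isFiniteLength_iff_isNoetherian_isArtinian.mpr ⟨isNoetherian_of_finite_isArtinian _, this⟩

end FiniteLength

namespace ModuleCat

open Submodule

variable {A : Type u} [CommRing A]

/-- The library instance covers only index categories in `Type u`, while sequential colimits
are indexed by `ℕ : Type`. -/
instance forget_preservesFilteredColimitsOfSize_zero :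
    PreservesFilteredColimitsOfSize.{0, 0} (forget (ModuleCat.{u} A)) :=
  preservesFilteredColimitsOfSize_of_univLE.{u, u, 0, 0} _

/-- `Hom(A ⧸ I, X)` is `X[I]`, via `h ↦ h 1`. -/
theorem torsionBySet_le_map_of_surjective_comp {X Y : ModuleCat.{u} A} (g : X ⟶ Y)
    (I : Ideal A) (hg : Function.Surjective fun h : ModuleCat.of A (A ⧸ I) ⟶ X => h ≫ g) :
    torsionBySet A Y I ≤ (torsionBySet A X I).map g.hom := by
  intro y hy
  rw [mem_torsionBySet_iff] at hy
  obtain ⟨h, hh⟩ := hg (ModuleCat.ofHom (I.liftQ (LinearMap.toSpanSingleton A Y y)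
    fun a ha => hy ⟨a, ha⟩))
  refine ⟨h (Submodule.Quotient.mk 1), (mem_torsionBySet_iff _ _).mpr fun ⟨a, ha⟩ => ?_, ?_⟩
  · rw [← map_smul, ← Submodule.Quotient.mk_smul, smul_eq_mul, mul_one,
      (Submodule.Quotient.mk_eq_zero _).mpr ha, map_zero]
  · exact congr(($hh).hom (Submodule.Quotient.mk 1)).trans (one_smul A y)

theorem exists_ι_apply_eq_of_mem_torsionBySet (F : ℕ ⥤ ModuleCat.{u} A) {I : Ideal A}
    (hI : I.FG) {y : ↑(colimit F)} (hy : y ∈ torsionBySet A (colimit F : ModuleCat.{u} A) I)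
    (n₀ : ℕ) : ∃ m, n₀ ≤ m ∧ ∃ ξ ∈ torsionBySet A (F.obj m) I, colimit.ι F m ξ = y := by
  obtain ⟨s, rfl⟩ := hI
  obtain ⟨n, ξ, rfl⟩ := Concrete.colimit_exists_rep F y
  rw [← torsionBySet_eq_torsionBySet_span, mem_torsionBySet_iff] at hy
  have hdies : ∀ a ∈ s, ∃ m, ∃ h : n ≤ m, F.map (homOfLE h) (a • ξ) = 0 := fun a ha => by
    obtain ⟨m, i, hi⟩ :=
      Concrete.colimit_rep_eq_zero A F n (a • ξ) (by rw [map_smul]; exact hy ⟨a, ha⟩)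
    exact ⟨m, leOfHom i, hi⟩
  choose! m hnm hm using hdies
  set m₀ := max n₀ (max n (s.sup m))
  have hn : n ≤ m₀ := (le_max_left _ _).trans (le_max_right _ _)
  refine ⟨m₀, le_max_left _ _, F.map (homOfLE hn) ξ, ?_, colimit.w_apply F (homOfLE hn) ξ⟩
  rw [← torsionBySet_eq_torsionBySet_span, mem_torsionBySet_iff]
  rintro ⟨a, ha⟩
  have hm₀ : m a ≤ m₀ := (Finset.le_sup ha).trans ((le_max_right _ _).trans (le_max_right _ _))
  rw [← map_smul, show homOfLE hn = homOfLE (hnm a ha) ≫ homOfLE hm₀ from rfl, F.map_comp,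
    ModuleCat.comp_apply, hm a ha, map_zero]

end ModuleCat

/-- Over a commutative noetherian semi-local ring, the colimit of a Cauchy
sequence of finite length modules is an artinian module. -/
theorem stmt_14 {A : Type u} [CommRing A] [IsNoetherianRing A]
    (hsemilocal : {I : Ideal A | I.IsMaximal}.Finite)
    (M : ℕ → ModuleCat.{u} A) (f : ∀ n, M n ⟶ M (n + 1))
    (hfl : ∀ n, IsFiniteLength A (M n))
    (hCauchy : ∀ (C : ModuleCat.{u} A), IsFiniteLength A C →
      ∃ N : ℕ, ∀ (i j : ℕ) (hij : i ≤ j), N ≤ i →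
        Function.Bijective (fun g : C ⟶ (Functor.ofSequence f).obj i =>
          g ≫ (Functor.ofSequence f).map (homOfLE hij))) :
    IsArtinian A ↥(colimit (Functor.ofSequence f)) := by
  set F := Functor.ofSequence f
  set J := Ring.jacobson A
  have hJ : J.FG := IsNoetherian.noetherian J
  have htor : ∀ y : ↑(colimit F), ∃ k : ℕ, J ^ k ≤ Ideal.torsionOf A _ y := by
    intro y
    obtain ⟨n, ξ, rfl⟩ := Concrete.colimit_exists_rep F y
    obtain ⟨k, hk⟩ := exists_pow_jacobson_le_annihilator (hfl n)
    refine ⟨k, fun a ha => ?_⟩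
    rw [Ideal.mem_torsionOf_iff, ← map_smul,
      show a • ξ = 0 from Module.mem_annihilator.mp (hk ha) ξ, map_zero]
  obtain ⟨N, hN⟩ := hCauchy (ModuleCat.of A (A ⧸ J)) (isFiniteLength_quotient_jacobson hsemilocal)
  have : IsArtinian A (F.obj N) := (isFiniteLength_iff_isNoetherian_isArtinian.mp (hfl N)).2
  have : IsArtinian A (Submodule.torsionBySet A (colimit F : ModuleCat.{u} A) J) := by
    refine isArtinian_of_le
      (t := LinearMap.range ((colimit.ι F N).hom ∘ₗ (Submodule.torsionBySet A (F.obj N) J).subtype))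
      fun y hy => ?_
    obtain ⟨m, hm, ξ, hξ, rfl⟩ := ModuleCat.exists_ι_apply_eq_of_mem_torsionBySet F hJ hy N
    obtain ⟨η, hη, rfl⟩ :=
      ModuleCat.torsionBySet_le_map_of_surjective_comp _ J (hN N m hm le_rfl).2 hξ
    exact ⟨⟨η, hη⟩, (colimit.w_apply F (homOfLE hm) η).symm⟩
  exact Submodule.isArtinian_of_isArtinian_torsionBySet hJ htor
end

section
/- Let A be a commutative noetherian ring with only finitely many maximal ideals (a semi-local ring), let J denote its Jacobson radical, and let M be an artinian A-module. Then for each n ≥ 0 the submodule Mₙ = {x ∈ M | a·x = 0 for all a ∈ Jⁿ} has finite length, and M = ⋃ₙ Mₙ; in particular M is the colimit (union) of an ascending chain of finite length submodules. -/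
/-!
Every prime ideal containing the Jacobson radical `J` contains a finite intersection of maximal
ideals, hence one of them, so it is maximal. Thus `A ⧸ Jⁿ` is a noetherian ring of dimension zero,
i.e. an artinian ring, and `Mₙ` is an artinian module over it, hence finitely generated; over the
noetherian ring `A` it then has finite length. For `x ∈ M`, the chain `Jⁿ • A x` stabilizes since
`M` is artinian, and Nakayama's lemma applied to the finitely generated module `Jⁿ • A x` shows
that its stable value is zero.
-/

universe u

open Ideal Submodule

theorem Ideal.IsPrime.isMaximal_of_jacobson_bot_le {A : Type*} [CommRing A]
    (hsemilocal : {I : Ideal A | I.IsMaximal}.Finite) {P : Ideal A} (hP : P.IsPrime)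
    (hJP : jacobson (⊥ : Ideal A) ≤ P) : P.IsMaximal := by
  have hjac : jacobson (⊥ : Ideal A) = sInf {I : Ideal A | I.IsMaximal} := by
    simp only [jacobson, bot_le, true_and]
  rw [hjac, ← hsemilocal.coe_toFinset, ← Finset.inf_id_eq_sInf, hP.inf_le'] at hJP
  obtain ⟨m, hm, hmP⟩ := hJP
  rw [Set.Finite.mem_toFinset, Set.mem_ofPred_eq] at hm
  rwa [← hm.eq_of_le hP.ne_top hmP]

theorem isArtinianRing_quotient_jacobson_bot_pow {A : Type*} [CommRing A] [IsNoetherianRing A]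
    (hsemilocal : {I : Ideal A | I.IsMaximal}.Finite) (n : ℕ) :
    IsArtinianRing (A ⧸ jacobson (⊥ : Ideal A) ^ n) := by
  have : Ring.KrullDimLE 0 (A ⧸ jacobson (⊥ : Ideal A) ^ n) :=
    krullDimLE_zero_quotient_iff_forall_minimalPrimes_isMaximal.mpr fun P hP ↦
      hP.1.1.isMaximal_of_jacobson_bot_le hsemilocal (hP.1.1.le_of_pow_le hP.1.2)
  exact IsNoetherianRing.isArtinianRing_of_krullDimLE_zero

theorem Module.IsTorsionBySet.finite_of_isArtinianRing_quotient {A M : Type*} [CommRing A]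
    [AddCommGroup M] [Module A M] [IsArtinian A M] {I : Ideal A} [IsArtinianRing (A ⧸ I)]
    (hM : Module.IsTorsionBySet A M I) : Module.Finite A M := by
  let _ := hM.module
  have : IsArtinian (A ⧸ I) M := isArtinian_of_tower A inferInstance
  have : Module.Finite (A ⧸ I) M := ((IsArtinianRing.tfae (A ⧸ I) M).out 2 0).mp this
  exact .trans (A ⧸ I) M

theorem Submodule.exists_pow_smul_eq_bot_of_le_jacobson {A M : Type*} [CommRing A]
    [AddCommGroup M] [Module A M] [IsArtinian A M] {I : Ideal A} (hIfg : I.FG)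
    (hI : I ≤ jacobson ⊥) {N : Submodule A M} (hN : N.FG) : ∃ n : ℕ, I ^ n • N = ⊥ := by
  let chain : ℕ →o (Submodule A M)ᵒᵈ :=
    ⟨fun n ↦ I ^ n • N, fun _ _ hmn ↦ smul_mono_left (pow_le_pow_right hmn)⟩
  obtain ⟨n, hn⟩ := IsArtinian.monotone_stabilizes chain
  have hstable : I ^ n • N = I ^ (n + 1) • N := hn (n + 1) n.le_succ
  refine ⟨n, eq_bot_of_le_smul_of_le_jacobson_bot I _ (Submodule.FG.smul hIfg.pow hN) ?_ hI⟩
  rw [← mul_smul, ← pow_succ', ← hstable]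

/-- Over a commutative noetherian semi-local ring `A` with Jacobson radical `J`,
every artinian module `M` is the union of its submodules `Mₙ = {x | Jⁿ • x = 0}`, each of
which has finite length. -/
theorem stmt_15 {A : Type u} [CommRing A] [IsNoetherianRing A]
    (hsemilocal : {I : Ideal A | I.IsMaximal}.Finite)
    (M : Type u) [AddCommGroup M] [Module A M] [IsArtinian A M] :
    (∀ n : ℕ, IsFiniteLength A
      (Submodule.torsionBySet A M (((⊥ : Ideal A).jacobson ^ n : Ideal A) : Set A))) ∧
    (∀ x : M, ∃ n : ℕ,
      x ∈ Submodule.torsionBySet A M (((⊥ : Ideal A).jacobson ^ n : Ideal A) : Set A)) := by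
  refine ⟨fun n ↦ ?_, fun x ↦ ?_⟩
  · have := isArtinianRing_quotient_jacobson_bot_pow hsemilocal n
    have := (torsionBySet_isTorsionBySet (R := A) (M := M)
      (jacobson (⊥ : Ideal A) ^ n : Ideal A)).finite_of_isArtinianRing_quotient
    exact isFiniteLength_iff_isNoetherian_isArtinian.mpr ⟨inferInstance, inferInstance⟩
  · obtain ⟨n, hn⟩ := exists_pow_smul_eq_bot_of_le_jacobson
      (IsNoetherian.noetherian (jacobson (⊥ : Ideal A))) le_rfl (fg_span_singleton x)
    refine ⟨n, (mem_torsionBySet_iff _ _).mpr fun ⟨a, ha⟩ ↦ ?_⟩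
    have := smul_mem_smul ha (mem_span_singleton_self x)
    rwa [hn, mem_bot] at this
end

section
/- Matlis double duality for finite length modules: Let A be a commutative noetherian local ring with maximal ideal m, and let E be an injective A-module equipped with an injective A-linear map ι : A/m → E whose image is an essential submodule of E (i.e., E is an injective envelope of A/m). Then for every A-module M of finite length, the canonical evaluation map M → Hom_A(Hom_A(M, E), E), sending x to the map f ↦ f(x), is bijective. -/
universe u

open IsLocalRing

section Aux

variable {A : Type u} [CommRing A] [IsLocalRing A]
variable {E : Type u} [AddCommGroup E] [Module A E]

lemma mk_eq_smul_one' (a : A) :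
    (Ideal.Quotient.mk (maximalIdeal A) a) = a • (1 : A ⧸ maximalIdeal A) := by
  have h1 : (1 : A ⧸ maximalIdeal A) = Submodule.Quotient.mk (1 : A) := rfl
  rw [h1, ← Submodule.Quotient.mk_smul, smul_eq_mul, mul_one]
  rfl

lemma subsingleton_hom' (P Q : Type u) [AddCommGroup P] [Module A P]
    [AddCommGroup Q] [Module A Q] [Subsingleton P] : Subsingleton (P →ₗ[A] Q) :=
  ⟨fun f g => by
    ext x
    rw [Subsingleton.elim x 0, map_zero, map_zero]⟩

lemma mem_range_of_torsion (ι : (A ⧸ maximalIdeal A) →ₗ[A] E)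
    (hess : ∀ N : Submodule A E, N ⊓ LinearMap.range ι = ⊥ → N = ⊥)
    {e : E} (he : ∀ a ∈ maximalIdeal A, a • e = 0) : e ∈ LinearMap.range ι := by
  rcases eq_or_ne e 0 with rfl | he0
  · exact Submodule.zero_mem _
  have hne : Submodule.span A {e} ⊓ LinearMap.range ι ≠ ⊥ := by
    intro h
    have h2 := hess _ h
    rw [Submodule.span_singleton_eq_bot] at h2
    exact he0 h2
  obtain ⟨y, hy, hy0⟩ := (Submodule.ne_bot_iff _).mp hne
  obtain ⟨hy1, hy2⟩ := Submodule.mem_inf.mp hy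
  obtain ⟨a, rfl⟩ := Submodule.mem_span_singleton.mp hy1
  have ha : IsUnit a := by
    by_contra hau
    exact hy0 (he a (IsLocalRing.mem_maximalIdeal a |>.mpr hau))
  obtain ⟨u, rfl⟩ := ha
  have h3 : e = (↑u⁻¹ : A) • ((u : A) • e) := by
    rw [smul_smul, Units.inv_mul, one_smul]
  rw [h3]
  exact Submodule.smul_mem _ _ hy2

lemma isSimpleModule_dual (ι : (A ⧸ maximalIdeal A) →ₗ[A] E)
    (hι : Function.Injective ι)
    (hess : ∀ N : Submodule A E, N ⊓ LinearMap.range ι = ⊥ → N = ⊥)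
    (T : Type u) [AddCommGroup T] [Module A T] [hT : IsSimpleModule A T] :
    IsSimpleModule A (T →ₗ[A] E) := by
  obtain ⟨I, hI, ⟨eT⟩⟩ := isSimpleModule_iff_quot_maximal.mp hT
  have hIm : I = maximalIdeal A := eq_maximalIdeal hI
  subst hIm
  set Φ : ((A ⧸ maximalIdeal A) →ₗ[A] E) →ₗ[A] E :=
    LinearMap.applyₗ (1 : A ⧸ maximalIdeal A) with hΦ
  have hΦapp : ∀ f : (A ⧸ maximalIdeal A) →ₗ[A] E, Φ f = f 1 := fun f => rfl
  have hΦinj : Function.Injective Φ := by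
    intro f g hfg
    rw [hΦapp, hΦapp] at hfg
    refine LinearMap.ext fun x => ?_
    obtain ⟨a, rfl⟩ := Ideal.Quotient.mk_surjective x
    rw [mk_eq_smul_one', map_smul, map_smul, hfg]
  have hrange : LinearMap.range Φ = LinearMap.range ι := by
    apply le_antisymm
    · rintro _ ⟨f, rfl⟩
      apply mem_range_of_torsion ι hess
      intro a ha
      have h1 : a • (1 : A ⧸ maximalIdeal A) = 0 := by
        rw [← mk_eq_smul_one']
        exact Ideal.Quotient.eq_zero_iff_mem.mpr ha
      rw [hΦapp, ← map_smul, h1, map_zero]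
    · rintro _ ⟨c, rfl⟩
      obtain ⟨a, rfl⟩ := Ideal.Quotient.mk_surjective c
      refine ⟨a • ι, ?_⟩
      rw [hΦapp, LinearMap.smul_apply, ← map_smul, ← mk_eq_smul_one']
  have hksimple : IsSimpleModule A (A ⧸ maximalIdeal A) := by
    rw [isSimpleModule_iff_isCoatom]
    exact hI.out
  have e1 : ((A ⧸ maximalIdeal A) →ₗ[A] E) ≃ₗ[A] LinearMap.range ι :=
    (LinearEquiv.ofInjective Φ hΦinj).trans (LinearEquiv.ofEq _ _ hrange)
  have e2 : LinearMap.range ι ≃ₗ[A] (A ⧸ maximalIdeal A) :=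
    (LinearEquiv.ofInjective ι hι).symm
  have e3 : (T →ₗ[A] E) ≃ₗ[A] ((A ⧸ maximalIdeal A) →ₗ[A] E) :=
    LinearEquiv.arrowCongr eT (LinearEquiv.refl A E)
  exact IsSimpleModule.congr (e3.trans (e1.trans e2))

lemma bijective_ev_simple (ι : (A ⧸ maximalIdeal A) →ₗ[A] E)
    (hι : Function.Injective ι)
    (hess : ∀ N : Submodule A E, N ⊓ LinearMap.range ι = ⊥ → N = ⊥)
    (S : Type u) [AddCommGroup S] [Module A S] [hS : IsSimpleModule A S] :
    Function.Bijective ⇑((LinearMap.id (R := A) (M := S →ₗ[A] E)).flip) := by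
  obtain ⟨I, hI, ⟨eS⟩⟩ := isSimpleModule_iff_quot_maximal.mp hS
  have hIm : I = maximalIdeal A := eq_maximalIdeal hI
  subst hIm
  set ev : S →ₗ[A] ((S →ₗ[A] E) →ₗ[A] E) :=
    (LinearMap.id (R := A) (M := S →ₗ[A] E)).flip with hev
  have hevapp : ∀ (x : S) (f : S →ₗ[A] E), ev x f = f x := fun _ _ => rfl
  have hinj : Function.Injective ⇑ev := by
    rw [← LinearMap.ker_eq_bot, Submodule.eq_bot_iff]
    intro x hx
    by_contra hx0
    have h1 : ι (eS x) ≠ 0 := by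
      intro h
      have h2 := hι (h.trans (map_zero ι).symm)
      exact hx0 (by simpa using eS.map_eq_zero_iff.mp h2)
    apply h1
    have h3 : ev x = 0 := hx
    have h4 := congrArg (fun g => g (ι ∘ₗ (eS : S →ₗ[A] (A ⧸ maximalIdeal A)))) h3
    simpa [hevapp] using h4
  refine ⟨hinj, ?_⟩
  have hd1 : IsSimpleModule A (S →ₗ[A] E) := isSimpleModule_dual ι hι hess S
  have hd2 : IsSimpleModule A ((S →ₗ[A] E) →ₗ[A] E) :=
    isSimpleModule_dual ι hι hess (S →ₗ[A] E)
  rw [← LinearMap.range_eq_top]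
  rcases eq_bot_or_eq_top (LinearMap.range ev) with h | h
  · exfalso
    have : Nontrivial S := IsSimpleModule.nontrivial A S
    obtain ⟨x, hx⟩ := exists_ne (0 : S)
    have h1 : ev x ∈ (⊥ : Submodule A ((S →ₗ[A] E) →ₗ[A] E)) := h ▸ LinearMap.mem_range_self ev x
    have h2 : ev x = 0 := h1
    exact hx (hinj (h2.trans (map_zero ev).symm))
  · exact h

lemma bijective_ev_step (hE : Module.Injective A E)
    (M : Type u) [AddCommGroup M] [Module A M] (N : Submodule A M)
    (hN : Function.Bijective ⇑((LinearMap.id (R := A) (M := (↥N) →ₗ[A] E)).flip))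
    (hSb : Function.Bijective ⇑((LinearMap.id (R := A) (M := (M ⧸ N) →ₗ[A] E)).flip)) :
    Function.Bijective ⇑((LinearMap.id (R := A) (M := M →ₗ[A] E)).flip) := by
  classical
  set evN : (↥N) →ₗ[A] (((↥N) →ₗ[A] E) →ₗ[A] E) :=
    (LinearMap.id (R := A) (M := (↥N) →ₗ[A] E)).flip with hevN
  set evS : (M ⧸ N) →ₗ[A] (((M ⧸ N) →ₗ[A] E) →ₗ[A] E) :=
    (LinearMap.id (R := A) (M := (M ⧸ N) →ₗ[A] E)).flip with hevS
  set evM : M →ₗ[A] ((M →ₗ[A] E) →ₗ[A] E) :=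
    (LinearMap.id (R := A) (M := M →ₗ[A] E)).flip with hevM
  set i : (↥N) →ₗ[A] M := N.subtype with hi
  set π : M →ₗ[A] (M ⧸ N) := N.mkQ with hπ
  set Di : (M →ₗ[A] E) →ₗ[A] ((↥N) →ₗ[A] E) := LinearMap.lcomp A E i with hDi
  set Dπ : ((M ⧸ N) →ₗ[A] E) →ₗ[A] (M →ₗ[A] E) := LinearMap.lcomp A E π with hDπ
  set DDi : (((↥N) →ₗ[A] E) →ₗ[A] E) →ₗ[A] ((M →ₗ[A] E) →ₗ[A] E) :=
    LinearMap.lcomp A E Di with hDDi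
  set DDπ : ((M →ₗ[A] E) →ₗ[A] E) →ₗ[A] (((M ⧸ N) →ₗ[A] E) →ₗ[A] E) :=
    LinearMap.lcomp A E Dπ with hDDπ
  have hDi_surj : Function.Surjective ⇑Di := by
    intro g
    obtain ⟨h, hh⟩ := hE.out i N.injective_subtype g
    exact ⟨h, by ext n; exact hh n⟩
  have hDπ_inj : Function.Injective ⇑Dπ := by
    intro g₁ g₂ h
    refine LinearMap.ext fun s => ?_
    obtain ⟨m, rfl⟩ := Submodule.Quotient.mk_surjective N s
    exact LinearMap.ext_iff.mp h m
  have hker : LinearMap.ker Di = LinearMap.range Dπ := by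
    ext g
    simp only [LinearMap.mem_ker, LinearMap.mem_range]
    constructor
    · intro hg
      have hle : N ≤ LinearMap.ker g := by
        intro n hn
        have h1 : Di g ⟨n, hn⟩ = 0 := by rw [hg]; rfl
        exact h1
      exact ⟨N.liftQ g hle, by ext m; simp [hDπ, hπ]⟩
    · rintro ⟨h, rfl⟩
      ext n
      have h1 : π (i n) = 0 := by
        rw [hi, hπ]
        simpa using (Submodule.Quotient.mk_eq_zero N).mpr n.2
      simp only [hDi, hDπ, LinearMap.lcomp_apply]
      rw [h1, map_zero, LinearMap.zero_apply]
  have hDDi_inj : Function.Injective ⇑DDi := by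
    intro y₁ y₂ h
    ext g
    obtain ⟨f, rfl⟩ := hDi_surj g
    exact LinearMap.ext_iff.mp h f
  have hDDπ_surj : Function.Surjective ⇑DDπ := by
    intro z
    obtain ⟨h, hh⟩ := hE.out Dπ hDπ_inj z
    exact ⟨h, by ext g; exact hh g⟩
  have hker2 : LinearMap.ker DDπ ≤ LinearMap.range DDi := by
    intro y hy
    rw [LinearMap.mem_ker] at hy
    have hyker : LinearMap.ker Di ≤ LinearMap.ker y := by
      rw [hker]
      rintro _ ⟨h, rfl⟩
      rw [LinearMap.mem_ker]
      exact LinearMap.ext_iff.mp hy h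
    set e := Di.quotKerEquivOfSurjective hDi_surj with he
    refine ⟨((LinearMap.ker Di).liftQ y hyker).comp (e.symm : ((↥N) →ₗ[A] E) →ₗ[A] _), ?_⟩
    ext g
    have he1 : e ((LinearMap.ker Di).mkQ g) = Di g := by
      simp [he, LinearMap.quotKerEquivOfSurjective]
    have he2 : e.symm (Di g) = (LinearMap.ker Di).mkQ g := by
      rw [← he1, LinearEquiv.symm_apply_apply]
    simp only [hDDi, LinearMap.lcomp_apply, LinearMap.comp_apply, LinearEquiv.coe_coe]
    rw [he2]
    simp
  -- naturality
  have nat1 : ∀ n : ↥N, DDi (evN n) = evM (i n) := fun n => by ext f; rfl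
  have nat2 : ∀ x : M, DDπ (evM x) = evS (π x) := fun x => by ext f; rfl
  have h0 : ∀ z : M, evM z = 0 → z = 0 := by
    intro z hz
    have h1 : evS (π z) = 0 := by rw [← nat2 z, hz, map_zero]
    have h2 : π z = 0 := hSb.injective (h1.trans (map_zero evS).symm)
    have hznN : z ∈ N := (Submodule.Quotient.mk_eq_zero N).mp h2
    have h3 : evM (i ⟨z, hznN⟩) = 0 := hz
    have h4 : DDi (evN ⟨z, hznN⟩) = 0 := (nat1 _).trans h3
    have h5 : evN ⟨z, hznN⟩ = 0 := hDDi_inj (h4.trans (map_zero DDi).symm)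
    have h6 : (⟨z, hznN⟩ : ↥N) = 0 := hN.injective (h5.trans (map_zero evN).symm)
    exact congrArg Subtype.val h6
  constructor
  · intro x y hxy
    have h1 : evM (x - y) = 0 := by
      rw [map_sub]
      rw [sub_eq_zero]
      exact hxy
    exact sub_eq_zero.mp (h0 _ h1)
  · intro y
    obtain ⟨s, hs⟩ := hSb.surjective (DDπ y)
    obtain ⟨x, rfl⟩ := Submodule.Quotient.mk_surjective N s
    have h1 : DDπ (y - evM x) = 0 := by
      rw [map_sub, nat2, sub_eq_zero]
      exact hs.symm
    have h2 : y - evM x ∈ LinearMap.range DDi := hker2 (LinearMap.mem_ker.mpr h1)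
    obtain ⟨w, hw⟩ := h2
    obtain ⟨n, rfl⟩ := hN.surjective w
    refine ⟨x + i n, ?_⟩
    rw [map_add, ← nat1, hw]
    abel

end Aux

/-- Matlis double duality: if `(A, 𝔪)` is commutative noetherian local and `E` is
an injective envelope of `A/𝔪`, then for every finite length `A`-module `M` the evaluation map
`M → Hom_A(Hom_A(M, E), E)` is bijective. -/
theorem stmt_17 {A : Type u} [CommRing A] [IsNoetherianRing A] [IsLocalRing A]
    (E : Type u) [AddCommGroup E] [Module A E] (hE : Module.Injective A E)
    (ι : (A ⧸ IsLocalRing.maximalIdeal A) →ₗ[A] E) (hι : Function.Injective ι)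
    (hess : ∀ N : Submodule A E, N ⊓ LinearMap.range ι = ⊥ → N = ⊥)
    (M : Type u) [AddCommGroup M] [Module A M] (hM : IsFiniteLength A M) :
    Function.Bijective ⇑((LinearMap.id (R := A) (M := M →ₗ[A] E)).flip) := by
  induction hM with
  | of_subsingleton =>
    rename_i M' _ _ _
    have h1 : Subsingleton (M' →ₗ[A] E) := subsingleton_hom' M' E
    have h2 : Subsingleton ((M' →ₗ[A] E) →ₗ[A] E) := subsingleton_hom' (M' →ₗ[A] E) E
    exact ⟨fun a b _ => Subsingleton.elim a b, fun y => ⟨0, Subsingleton.elim _ _⟩⟩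
  | of_simple_quotient h ih =>
    rename_i M' _ _ N _
    exact bijective_ev_step hE M' N ih (bijective_ev_simple ι hι hess (M' ⧸ N))
end
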